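/- Let V = Σ_{i=0}^{d} n_i·Sym^{2i}(ℂ²) and W = Σ_{i=1}^{d} m_i·Sym^{2i−1}(ℂ²) be two finite-dimensional representations of SU(2). Then 2·[dim(V⊗V)[0] + dim(W⊗W)[0] − 2·dim(V⊗W)[1]] ≥ n_0² + n_1² + ⋯ + n_{d−1}² + 2·n_d². -/

import Mathlib

/-!
Write `a j = dim V[j]` and `b j = dim W[j]`; both are even functions of `j`. Then
`dim(V⊗V)[0] = ∑ a_j²`, `dim(W⊗W)[0] = ∑ b_j²` and `dim(V⊗W)[1] = ∑ a_j b_{j+1}`, so the bracket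
is `∑_j (a_j - b_{j+1})²`. Along the chain `a_{2i}, b_{2i+1}, a_{2i+2}` the two steps add up to
`a_{2i} - a_{2i+2} = n_i`, whence `n_i² ≤ 2((a_{2i} - b_{2i+1})² + (a_{2i+2} - b_{2i+1})²)`, and
by evenness the second square is the term `j = -2i-2` of the bracket. At the top `b_{2d+1} = 0`
and `a_{2d} = n_d`, so the term `j = 2d` is `n_d²`.
-/

/-- `wtDim ℓ k` is the dimension of the `k`-weight space (for the standard maximal torus
`S¹ ⊂ SU(2)`, acting by `z ↦ z^k`) of the representation `⊕ᵢ ℓ i · Sym^i(ℂ²)` of `SU(2)`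
encoded by its multiplicity function `ℓ : ℕ → ℕ`:
`dim E[k] = Σ_{i ≥ |k|, i ≡ k (mod 2)} ℓ i`. -/
noncomputable def wtDim (ℓ : ℕ → ℕ) (k : ℤ) : ℕ :=
  ∑ᶠ i : ℕ, if k.natAbs ≤ i ∧ k % 2 = (i : ℤ) % 2 then ℓ i else 0

/-- `tensorWtDim ℓ₁ ℓ₂ k` is the dimension of the `k`-weight space of the tensor product
of the `SU(2)`-representations encoded by `ℓ₁` and `ℓ₂`:
`dim (E⊗F)[k] = Σ_{j ∈ ℤ} dim E[j] · dim F[k-j]`. -/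
noncomputable def tensorWtDim (ℓ₁ ℓ₂ : ℕ → ℕ) (k : ℤ) : ℕ :=
  ∑ᶠ j : ℤ, wtDim ℓ₁ j * wtDim ℓ₂ (k - j)

/-- Multiplicity function of `V = Σ_{i=0}^{d} n_i · Sym^{2i}(ℂ²)`
(trivial central character). -/
def evenRep (d : ℕ) (n : ℕ → ℕ) : ℕ → ℕ :=
  fun j => if j % 2 = 0 ∧ j / 2 ≤ d then n (j / 2) else 0

/-- Multiplicity function of `W = Σ_{i=1}^{d} m_i · Sym^{2i-1}(ℂ²)`
(non-trivial central character). -/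
def oddRep (d : ℕ) (m : ℕ → ℕ) : ℕ → ℕ :=
  fun j => if j % 2 = 1 ∧ (j + 1) / 2 ≤ d then m ((j + 1) / 2) else 0

open Function

section WeightSpaces

variable {ℓ ℓ₁ ℓ₂ : ℕ → ℕ}

lemma wtDim_neg (ℓ : ℕ → ℕ) (k : ℤ) : wtDim ℓ (-k) = wtDim ℓ k := by
  simp only [wtDim, Int.natAbs_neg, Int.neg_emod_two]

lemma wtDim_eq_zero {k : ℤ} (h : ∀ i, k.natAbs ≤ i → ℓ i = 0) : wtDim ℓ k = 0 :=
  finsum_eq_zero_of_forall_eq_zero fun i => by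
    split_ifs with hi
    · exact h i hi.1
    · rfl

@[fun_prop]
lemma Function.HasFiniteSupport.wtDim (hℓ : ℓ.HasFiniteSupport) : (wtDim ℓ).HasFiniteSupport := by
  obtain ⟨N, hN⟩ := hℓ.bddAbove
  refine (Set.finite_Icc (-(N : ℤ)) N).subset fun k hk => ?_
  by_contra hkN
  refine hk (wtDim_eq_zero fun i hi => ?_)
  by_contra hi'
  have := hN hi'
  simp only [Set.mem_Icc, not_and_or, not_le] at hkN
  omega

lemma wtDim_natCast_eq_add_wtDim_add_two (hℓ : ℓ.HasFiniteSupport) (k : ℕ) :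
    wtDim ℓ k = ℓ k + wtDim ℓ ((k : ℤ) + 2) := by
  have hsplit : ∀ i : ℕ,
      (if (k : ℤ).natAbs ≤ i ∧ (k : ℤ) % 2 = (i : ℤ) % 2 then ℓ i else 0) =
        (if i = k then ℓ i else 0) +
          if ((k : ℤ) + 2).natAbs ≤ i ∧ ((k : ℤ) + 2) % 2 = (i : ℤ) % 2 then ℓ i else 0 := by
    intro i
    split_ifs <;> omega
  rw [wtDim, finsum_congr hsplit, finsum_add_distrib, finsum_eq_single _ k fun i hi => if_neg hi,
    if_pos rfl, wtDim]
  · exact (Set.finite_singleton k).subset fun i hi => by_contra fun h => hi (if_neg h)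
  · exact hℓ.subset fun i hi => by_contra fun h => hi (by simp_all)

lemma tensorWtDim_self_zero (ℓ : ℕ → ℕ) : tensorWtDim ℓ ℓ 0 = ∑ᶠ j, wtDim ℓ j ^ 2 := by
  simp only [tensorWtDim, zero_sub, wtDim_neg, sq]

lemma tensorWtDim_one (ℓ₁ ℓ₂ : ℕ → ℕ) :
    tensorWtDim ℓ₁ ℓ₂ 1 = ∑ᶠ j, wtDim ℓ₁ j * wtDim ℓ₂ (j + 1) := by
  rw [tensorWtDim, ← finsum_comp_equiv (Equiv.neg ℤ)]
  simp only [Equiv.neg_apply, wtDim_neg, sub_neg_eq_add, add_comm]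

theorem tensorWtDim_defect_eq_finsum_sq (hℓ₁ : ℓ₁.HasFiniteSupport) (hℓ₂ : ℓ₂.HasFiniteSupport) :
    (tensorWtDim ℓ₁ ℓ₁ 0 + tensorWtDim ℓ₂ ℓ₂ 0 - 2 * tensorWtDim ℓ₁ ℓ₂ 1 : ℤ) =
      ∑ᶠ j, ((wtDim ℓ₁ j : ℤ) - wtDim ℓ₂ (j + 1)) ^ 2 := by
  have hcast (f : ℤ → ℕ) (hf : f.HasFiniteSupport) : ((∑ᶠ j, f j : ℕ) : ℤ) = ∑ᶠ j, (f j : ℤ) :=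
    map_finsum (Nat.castAddMonoidHom ℤ) hf
  have hshift : ∑ᶠ j, (wtDim ℓ₂ (j + 1) : ℤ) ^ 2 = ∑ᶠ j, (wtDim ℓ₂ j : ℤ) ^ 2 :=
    finsum_comp_equiv (Equiv.addRight 1) (f := fun j => (wtDim ℓ₂ j : ℤ) ^ 2)
  rw [tensorWtDim_self_zero, tensorWtDim_self_zero, tensorWtDim_one, hcast, hcast, hcast]
  · simp only [Nat.cast_pow, Nat.cast_mul]
    rw [← hshift, mul_finsum, ← finsum_add_distrib, ← finsum_sub_distrib]
    · exact finsum_congr fun j => by ring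
    all_goals fun_prop (disch := first | simp | exact add_left_injective 1)
  all_goals fun_prop (disch := simp)

lemma sq_le_two_mul_sq_wtDim_sub_add (hℓ₁ : ℓ₁.HasFiniteSupport) (ℓ₂ : ℕ → ℕ) (k : ℕ) :
    (ℓ₁ k : ℤ) ^ 2 ≤ 2 * (((wtDim ℓ₁ k : ℤ) - wtDim ℓ₂ (k + 1)) ^ 2 +
      ((wtDim ℓ₁ (k + 2) : ℤ) - wtDim ℓ₂ (k + 1)) ^ 2) := by
  set x : ℤ := (wtDim ℓ₁ k : ℤ) - wtDim ℓ₂ (k + 1)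
  set y : ℤ := (wtDim ℓ₁ (k + 2) : ℤ) - wtDim ℓ₂ (k + 1)
  have hk : (ℓ₁ k : ℤ) = x + -y := by
    simp only [x, y, wtDim_natCast_eq_add_wtDim_add_two hℓ₁ k]
    push_cast
    ring
  rw [hk, ← neg_sq y]
  exact add_sq_le

end WeightSpaces

lemma Finset.sum_le_finsum {α M : Type*} [AddCommMonoid M] [PartialOrder M]
    [IsOrderedAddMonoid M] {g : α → M} (hg : g.HasFiniteSupport) (hg₀ : 0 ≤ g) (s : Finset α) :
    ∑ j ∈ s, g j ≤ ∑ᶠ j, g j := by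
  classical
  rw [finsum_eq_sum_of_support_subset g (s := s ∪ hg.toFinset)
    fun j hj => Finset.mem_union_right _ (hg.mem_toFinset.2 hj)]
  exact Finset.sum_le_sum_of_subset_of_nonneg Finset.subset_union_left fun j _ _ => hg₀ j

lemma sum_sq_wtDim_sub_le_finsum {ℓ₁ ℓ₂ : ℕ → ℕ} (hℓ₁ : ℓ₁.HasFiniteSupport)
    (hℓ₂ : ℓ₂.HasFiniteSupport) (p q : ℕ) :
    ∑ i ∈ Finset.range p, ((wtDim ℓ₁ (2 * i) : ℤ) - wtDim ℓ₂ (2 * i + 1)) ^ 2 +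
        ∑ i ∈ Finset.range q, ((wtDim ℓ₁ (2 * i + 2) : ℤ) - wtDim ℓ₂ (2 * i + 1)) ^ 2 ≤
      ∑ᶠ j, ((wtDim ℓ₁ j : ℤ) - wtDim ℓ₂ (j + 1)) ^ 2 := by
  have hg : HasFiniteSupport fun j => ((wtDim ℓ₁ j : ℤ) - wtDim ℓ₂ (j + 1)) ^ 2 := by
    fun_prop (disch := first | simp | exact add_left_injective 1)
  set g : ℤ → ℤ := fun j => ((wtDim ℓ₁ j : ℤ) - wtDim ℓ₂ (j + 1)) ^ 2
  have hneg (i : ℕ) :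
      ((wtDim ℓ₁ (2 * i + 2) : ℤ) - wtDim ℓ₂ (2 * i + 1)) ^ 2 = g (-(2 * i + 2)) := by
    simp only [g, wtDim_neg, show -(2 * (i : ℤ) + 2) + 1 = -(2 * i + 1) by ring]
  have hdisj : Disjoint ((Finset.range p).image fun i : ℕ => 2 * (i : ℤ))
      ((Finset.range q).image fun i : ℕ => -(2 * (i : ℤ) + 2)) := by
    simp only [Finset.disjoint_left, Finset.mem_image]
    omega
  simp only [hneg]
  rw [← Finset.sum_image (f := g) (g := fun i : ℕ => 2 * (i : ℤ)) (by intro x _ y _ h; simp_all),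
    ← Finset.sum_image (f := g) (g := fun i : ℕ => -(2 * (i : ℤ) + 2))
      (by intro x _ y _ h; simp_all),
    ← Finset.sum_union hdisj]
  exact Finset.sum_le_finsum hg (fun _ => sq_nonneg _) _

section Representations

variable {d : ℕ} (n m : ℕ → ℕ)

lemma evenRep_eq_zero_of_lt {j : ℕ} (h : 2 * d < j) : evenRep d n j = 0 := if_neg (by omega)

lemma oddRep_eq_zero_of_lt {j : ℕ} (h : 2 * d < j) : oddRep d m j = 0 := if_neg (by omega)

lemma evenRep_two_mul {i : ℕ} (h : i ≤ d) : evenRep d n (2 * i) = n i := by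
  simp [evenRep, h]

lemma hasFiniteSupport_evenRep : (evenRep d n).HasFiniteSupport :=
  (Set.finite_Iic (2 * d)).subset fun _ hj => not_lt.1 fun h => hj (evenRep_eq_zero_of_lt n h)

lemma hasFiniteSupport_oddRep : (oddRep d m).HasFiniteSupport :=
  (Set.finite_Iic (2 * d)).subset fun _ hj => not_lt.1 fun h => hj (oddRep_eq_zero_of_lt m h)

lemma wtDim_evenRep_sub_wtDim_oddRep_top :
    (wtDim (evenRep d n) (2 * d) : ℤ) - wtDim (oddRep d m) (2 * d + 1) = n d := by
  have := wtDim_natCast_eq_add_wtDim_add_two (hasFiniteSupport_evenRep (d := d) n) (2 * d)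
  push_cast at this
  rw [this, evenRep_two_mul n le_rfl,
    wtDim_eq_zero fun i hi => evenRep_eq_zero_of_lt n (by omega),
    wtDim_eq_zero fun i hi => oddRep_eq_zero_of_lt m (by omega)]
  simp

end Representations

/-- For `V = Σ_{i=0}^{d} n_i·Sym^{2i}(ℂ²)` and `W = Σ_{i=1}^{d} m_i·Sym^{2i-1}(ℂ²)`,
`2·[dim(V⊗V)[0] + dim(W⊗W)[0] − 2·dim(V⊗W)[1]] ≥ n_0² + ⋯ + n_{d-1}² + 2·n_d²`. -/
theorem lower_bound_n_squares (d : ℕ) (n m : ℕ → ℕ) :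
    (∑ i ∈ Finset.range d, (n i : ℤ) ^ 2) + 2 * (n d : ℤ) ^ 2 ≤
      2 * ((tensorWtDim (evenRep d n) (evenRep d n) 0 : ℤ)
        + tensorWtDim (oddRep d m) (oddRep d m) 0
        - 2 * tensorWtDim (evenRep d n) (oddRep d m) 1) := by
  have hV := hasFiniteSupport_evenRep (d := d) n
  have hW := hasFiniteSupport_oddRep (d := d) m
  have hbound := sum_sq_wtDim_sub_le_finsum hV hW (d + 1) d
  rw [Finset.sum_range_succ, wtDim_evenRep_sub_wtDim_oddRep_top] at hbound
  have hsum : ∑ i ∈ Finset.range d, (n i : ℤ) ^ 2 ≤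
      2 * (∑ i ∈ Finset.range d, ((wtDim (evenRep d n) (2 * i) : ℤ) -
          wtDim (oddRep d m) (2 * i + 1)) ^ 2 +
        ∑ i ∈ Finset.range d, ((wtDim (evenRep d n) (2 * i + 2) : ℤ) -
          wtDim (oddRep d m) (2 * i + 1)) ^ 2) := by
    rw [← Finset.sum_add_distrib, Finset.mul_sum]
    refine Finset.sum_le_sum fun i hi => ?_
    have := sq_le_two_mul_sq_wtDim_sub_add hV (oddRep d m) (2 * i)
    push_cast at this
    rwa [evenRep_two_mul n (Finset.mem_range.1 hi).le] at this
  rw [tensorWtDim_defect_eq_finsum_sq hV hW]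
  linarith
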